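/- With μ_i and λ_j defined as in the previous context, the Poisson bracket {μ_i, λ_j} equals (Δ^{1,i+1,…,n}_{i,i+1,…,n}(C_1)/Δ^{i+1,…,n}_{i+1,…,n}(C_t)) · ∑_{k=1}^{i} (Δ^{i,i+1,…,n}_{k,i+1,…,n}(C_t)/Δ^{i,…,n}_{i,…,n}(C_t)) · ∑_{l=j}^{n} (−1)^{l−j} (Δ^{j+1,…,n}_{j,…,l̂,…,n}(C_t)/Δ^{1,j+1,…,n}_{j,j+1,…,n}(C_1)) δ_{k,l}, and this expression equals δ_{i,j}; in particular {μ_i, λ_j} = δ_{i,j} for all 1 ≤ i, j ≤ n (assuming all minors in denominators are nonzero). -/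

import Mathlib

open Matrix Finset

/-- The minor determinant `Δ^{rows}_{cols}(C)`. -/
def minorDet {R : Type*} [CommRing R] {n r : ℕ} (C : Matrix (Fin n) (Fin n) R)
    (rows cols : Fin r → Fin n) : R :=
  (C.submatrix rows cols).det

/-- The index list `(i, i+1, …, n-1)` (0-based). -/
def idxFrom {n : ℕ} (i : ℕ) : Fin (n - i) → Fin n :=
  fun l => ⟨i + l.1, by have := l.2; omega⟩

/-- The index list `(k, i+1, …, n-1)` (0-based). -/
def idxRepl {n : ℕ} (i : ℕ) (k : Fin n) : Fin (n - i) → Fin n :=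
  fun l => if l.1 = 0 then k else ⟨i + l.1, by have := l.2; omega⟩

/-- `Δ^{1,i+1,…,n}_{i,i+1,…,n}(C)` (0-based: rows `(0, i+1, …, n-1)`, columns
`(i, …, n-1)`). -/
def minA {R : Type*} [CommRing R] {n : ℕ} (C : Matrix (Fin n) (Fin n) R)
    (i : Fin n) : R :=
  minorDet C (idxRepl i.1 ⟨0, by have := i.isLt; omega⟩) (idxFrom i.1)

/-- `Δ^{i,i+1,…,n}_{k,i+1,…,n}(C)`. -/
def minB {R : Type*} [CommRing R] {n : ℕ} (C : Matrix (Fin n) (Fin n) R)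
    (i k : Fin n) : R :=
  minorDet C (idxFrom i.1) (idxRepl i.1 k)

/-- `Δ^{i+1,…,n}_{i+1,…,n}(C)`. -/
def minC {R : Type*} [CommRing R] {n : ℕ} (C : Matrix (Fin n) (Fin n) R)
    (i : Fin n) : R :=
  minorDet C (idxFrom (i.1 + 1)) (idxFrom (i.1 + 1))

/-- `Δ^{i,…,n}_{i,…,n}(C)`. -/
def minD {R : Type*} [CommRing R] {n : ℕ} (C : Matrix (Fin n) (Fin n) R)
    (i : Fin n) : R :=
  minorDet C (idxFrom i.1) (idxFrom i.1)

/-- `μ_i = (-1)^{n-1-i} t⁻¹ (Δ^{0,i+1,…}_{i,…}(C₁)/Δ^{i+1,…}_{i+1,…}(C_t))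
  ∑_{k≤i} (Δ^{i,…}_{k,i+1,…}(C_t)/Δ^{i,…}_{i,…}(C_t)) b_k`  (0-based). -/
def muVar {A : Type*} [Field A] {n : ℕ} (t : A) (b : Fin n → A)
    (Ct C1 : Matrix (Fin n) (Fin n) A) (i : Fin n) : A :=
  (-1 : A) ^ (n - 1 - i.1) * t⁻¹ * (minA C1 i / minC Ct i) *
    ∑ k : Fin n, if k.1 ≤ i.1 then (minB Ct i k / minD Ct i) * b k else 0

/-- `λ_i = (-1)^{n-i} t · Δ^{0,i+1,…}_{i,…}(C_t)/Δ^{0,i+1,…}_{i,…}(C₁)` (0-based). -/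
def lamVar {A : Type*} [Field A] {n : ℕ} (t : A)
    (Ct C1 : Matrix (Fin n) (Fin n) A) (i : Fin n) : A :=
  (-1 : A) ^ (n - i.1) * t * (minA Ct i / minA C1 i)

/-- The index list `(j, …, n-1)` with `k` omitted (0-based). -/
def idxOmit {n : ℕ} (j k : ℕ) : Fin (n - (j + 1)) → Fin n :=
  fun l => if j + l.1 < k then ⟨j + l.1, by have := l.2; omega⟩
    else ⟨j + l.1 + 1, by have := l.2; omega⟩

/-- `Δ^{j+1,…,n}_{j,…,l̂,…,n}(C)`. -/
def minOmit {R : Type*} [CommRing R] {n : ℕ} (C : Matrix (Fin n) (Fin n) R)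
    (j l : Fin n) : R :=
  minorDet C (idxFrom (j.1 + 1)) (idxOmit j.1 l.1)


/-!
For fixed `z`, `x ↦ {x, z}` is a derivation, so it kills everything built rationally from
elements it kills. Hence in `{μ_i, λ_j}` only the brackets `{b_k, λ_j}` survive, and since `b_k`
pairs only with the first row of `C_t`, `{b_k, λ_j}` is, up to the scalar factor of `λ_j`, the
cofactor of `c^{(t)}_{1,k}` in `Δ^{1,j+1,…,n}_{j,…,n}(C_t)`. The bracket is therefore the pairing
of the row `(Δ^{i,…,n}_{k,i+1,…,n}(C_t))_k` with these cofactors. For `i = j` only `k = i`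
contributes, giving `Δ^{i,…,n}_{i,…,n}(C_t) Δ^{i+1,…,n}_{i+1,…,n}(C_t)`; for `i < j` the
supports are disjoint; for `j < i`, Cramer's rule writes the row as a combination of the rows
`i, …, n` of `C_t`, all of which occur among the rows of the minor, so every term is a
determinant with a repeated row.
-/

section Minors

variable {R : Type*} [CommRing R] {n : ℕ}

/-- `(-1)^(k-j) Δ^{j+1,…,n}_{j,…,k̂,…,n}(C)`: the cofactor of the entry in column `k` of the
first row of `minA C j`, and `0` outside the columns `j, …, n-1` of that minor. -/
def cofactorRow (C : Matrix (Fin n) (Fin n) R) (j : Fin n) : Fin n → R :=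
  fun k => if j.1 ≤ k.1 then (-1) ^ (k.1 - j.1) * minOmit C j k else 0

lemma sum_ite_le_eq_sum_add (j : Fin n) (f : Fin n → R) :
    ∑ k : Fin n, (if j.1 ≤ k.1 then f k else 0)
      = ∑ c : Fin (n - (j.1 + 1) + 1), f ⟨j.1 + c.1, by omega⟩ := by
  rw [← Finset.sum_filter]
  refine Finset.sum_nbij' (fun k => ⟨k.1 - j.1, by omega⟩) (fun c => ⟨j.1 + c.1, by omega⟩)
    (by simp) (fun c _ => by simp only [Finset.mem_filter, Finset.mem_univ, true_and]; omega)
    (fun k hk => ?_) (fun c _ => by ext; simp) (fun k hk => ?_) <;>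
  simp only [Finset.mem_filter, Finset.mem_univ, true_and] at hk
  · ext; simp only; omega
  · congr; ext; simp only; omega

lemma minA_eq_dotProduct (C : Matrix (Fin n) (Fin n) R) (j : Fin n) :
    minA C j = C ⟨0, j.pos⟩ ⬝ᵥ cofactorRow C j := by
  have h : n - (j.1 + 1) + 1 = n - j.1 := by omega
  rw [minA, minorDet, ← det_submatrix_equiv_self (finCongr h), det_succ_row_zero, dotProduct]
  simp only [cofactorRow, mul_ite, mul_zero]
  rw [sum_ite_le_eq_sum_add]
  refine Finset.sum_congr rfl fun c _ => ?_
  have hsub : ((C.submatrix (idxRepl j.1 ⟨0, j.pos⟩) (idxFrom j.1)).submatrix (finCongr h)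
      (finCongr h)).submatrix Fin.succ c.succAbove
      = C.submatrix (idxFrom (j.1 + 1)) (idxOmit j.1 (j.1 + c.1)) := by
    ext r c'
    simp only [submatrix_apply, finCongr_apply, Fin.val_cast, Fin.val_succ, idxRepl, idxFrom,
      idxOmit]
    rw [if_neg (by omega)]
    rcases lt_or_ge c'.1 c.1 with hc | hc
    · rw [Fin.succAbove_of_castSucc_lt _ _ (by simpa [Fin.lt_def] using hc), if_pos (by simpa)]
      congr 1; ext; simp only; omega
    · rw [Fin.succAbove_of_le_castSucc _ _ (by simpa [Fin.le_def] using hc),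
        if_neg (by simp; omega)]
      congr 1; ext; simp only; omega
  rw [hsub]
  simp only [submatrix_apply, finCongr_apply, idxRepl, Fin.val_cast, Fin.coe_ofNat_eq_mod,
    Nat.zero_mod, ↓reduceIte, idxFrom, add_tsub_cancel_left, minOmit, minorDet]
  ring

lemma cofactorRow_updateRow_zero (C : Matrix (Fin n) (Fin n) R) (j : Fin n) (w : Fin n → R) :
    cofactorRow (C.updateRow ⟨0, j.pos⟩ w) j = cofactorRow C j := by
  ext k
  have hrows : (C.updateRow ⟨0, j.pos⟩ w).submatrix (idxFrom (j.1 + 1)) (idxOmit j.1 k.1)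
      = C.submatrix (idxFrom (j.1 + 1)) (idxOmit j.1 k.1) := by
    ext r c
    rw [submatrix_apply, submatrix_apply, updateRow_ne (by simp [Fin.ext_iff, idxFrom])]
  simp only [cofactorRow, minOmit, minorDet, hrows]

lemma minA_updateRow_zero (C : Matrix (Fin n) (Fin n) R) (j : Fin n) (w : Fin n → R) :
    minA (C.updateRow ⟨0, j.pos⟩ w) j = w ⬝ᵥ cofactorRow C j := by
  rw [minA_eq_dotProduct, updateRow_self, cofactorRow_updateRow_zero]

lemma row_dotProduct_cofactorRow_of_lt (C : Matrix (Fin n) (Fin n) R) {j r : Fin n}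
    (hjr : j < r) : C r ⬝ᵥ cofactorRow C j = 0 := by
  -- `minA` of `C` with row `0` replaced by row `r`, which is already among its rows
  rw [← minA_updateRow_zero, minA, minorDet]
  refine det_zero_of_row_eq (i := ⟨0, by omega⟩) (j := ⟨r.1 - j.1, by omega⟩)
    (by simp [Fin.ext_iff]; omega) (funext fun c => ?_)
  simp only [submatrix_apply, idxRepl]
  rw [if_pos trivial, if_neg (by omega), updateRow_self,
    updateRow_ne (by simp [Fin.ext_iff]; omega)]
  congr; ext; simp only; omega

lemma minB_eq_zero_of_lt (C : Matrix (Fin n) (Fin n) R) {i k : Fin n} (hik : i < k) :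
    minB C i k = 0 := by
  rw [minB, minorDet]
  refine det_zero_of_column_eq (i := ⟨0, by omega⟩) (j := ⟨k.1 - i.1, by omega⟩)
    (by simp [Fin.ext_iff]; omega) fun r => ?_
  simp only [submatrix_apply, idxRepl]
  rw [if_pos trivial, if_neg (by omega)]
  congr; ext; simp only; omega

lemma minB_self (C : Matrix (Fin n) (Fin n) R) (i : Fin n) : minB C i i = minD C i := by
  rw [minB, minD, minorDet, minorDet]
  congr 1
  ext r c
  simp only [submatrix_apply, idxRepl, idxFrom]
  split_ifs with h
  · congr 1; ext; simp only; omega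
  · rfl

lemma minOmit_self (C : Matrix (Fin n) (Fin n) R) (i : Fin n) : minOmit C i i = minC C i := by
  rw [minOmit, minC, minorDet, minorDet]
  congr 1
  ext r c
  simp only [submatrix_apply, idxOmit, idxFrom]
  rw [if_neg (by omega)]
  congr 1; ext; simp only; omega

/-- Cramer's rule: `k ↦ minB C i k` is a combination of the rows `i, …, n-1` of `C`. -/
lemma minB_eq_sum_adjugate (C : Matrix (Fin n) (Fin n) R) (i k : Fin n) :
    minB C i k = ∑ r, adjugate (C.submatrix (idxFrom i.1) (idxFrom i.1)) ⟨0, by omega⟩ r *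
      C (idxFrom i.1 r) k := by
  have hcol : C.submatrix (idxFrom i.1) (idxRepl i.1 k)
      = (C.submatrix (idxFrom i.1) (idxFrom i.1)).updateCol ⟨0, by omega⟩
          fun r => C (idxFrom i.1 r) k := by
    ext r c
    simp only [submatrix_apply, updateCol_apply, idxRepl, Fin.ext_iff]
    split_ifs <;> rfl
  rw [minB, minorDet, hcol, ← cramer_apply, cramer_eq_adjugate_mulVec, mulVec, dotProduct]

lemma cofactorRow_of_lt (C : Matrix (Fin n) (Fin n) R) {j k : Fin n} (hkj : k < j) :
    cofactorRow C j k = 0 :=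
  if_neg (by omega)

lemma minB_dotProduct_cofactorRow (C : Matrix (Fin n) (Fin n) R) (i j : Fin n) :
    (fun k => minB C i k) ⬝ᵥ cofactorRow C j = if i = j then minD C i * minC C i else 0 := by
  rcases lt_trichotomy j i with hji | rfl | hij
  · rw [if_neg hji.ne']
    have hrows : (fun k => minB C i k)
        = ∑ r, adjugate (C.submatrix (idxFrom i.1) (idxFrom i.1)) ⟨0, by omega⟩ r •
            C (idxFrom i.1 r) := by
      ext k
      simp [minB_eq_sum_adjugate]
    rw [hrows, sum_dotProduct]
    refine Finset.sum_eq_zero fun r _ => ?_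
    have hjr : j < idxFrom i.1 r := by simp only [Fin.lt_def, idxFrom]; omega
    rw [smul_dotProduct, row_dotProduct_cofactorRow_of_lt C hjr, smul_zero]
  · rw [if_pos rfl, dotProduct, Finset.sum_eq_single j]
    · rw [minB_self, cofactorRow, if_pos le_rfl, Nat.sub_self, pow_zero, one_mul, minOmit_self]
    · intro k _ hk
      rcases lt_or_gt_of_ne hk with h | h
      · rw [cofactorRow_of_lt C h, mul_zero]
      · rw [minB_eq_zero_of_lt C h, zero_mul]
    · simp
  · rw [if_neg hij.ne, dotProduct]
    refine Finset.sum_eq_zero fun k _ => ?_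
    rcases le_or_gt k i with h | h
    · rw [cofactorRow_of_lt C (lt_of_le_of_lt h hij), mul_zero]
    · rw [minB_eq_zero_of_lt C h, zero_mul]

lemma sum_minB_div_mul_cofactorRow {K : Type*} [Field K] (C : Matrix (Fin n) (Fin n) K)
    (i j : Fin n) (x : K) (hD : minD C i ≠ 0) :
    ∑ k : Fin n, (if k.1 ≤ i.1 then minB C i k / minD C i * (cofactorRow C j k * x) else 0)
      = if i = j then minC C i * x else 0 := by
  calc _ = (minD C i)⁻¹ * x * ((fun k => minB C i k) ⬝ᵥ cofactorRow C j) := by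
        rw [dotProduct, Finset.mul_sum]
        refine Finset.sum_congr rfl fun k _ => ?_
        split_ifs with hki
        · ring
        · rw [minB_eq_zero_of_lt C (by omega)]
          ring
    _ = _ := by
        rw [minB_dotProduct_cofactorRow]
        split_ifs
        · field_simp
        · ring

lemma minorDet_mem {S : Type*} [SetLike S R] [SubringClass S R] (s : S) {r : ℕ}
    (C : Matrix (Fin n) (Fin n) R) (rows cols : Fin r → Fin n)
    (h : ∀ a c, C (rows a) (cols c) ∈ s) : minorDet C rows cols ∈ s := by
  rw [minorDet, det_apply]
  refine sum_mem fun σ _ => ?_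
  rw [Units.smul_def]
  exact zsmul_mem (prod_mem fun a _ => h _ _) _

end Minors

namespace Derivation

variable {R K : Type*} [CommRing R] [Field K] [Algebra R K] (D : Derivation R K K)

def constants : Subfield K where
  carrier := {x | D x = 0}
  mul_mem' ha hb := by simp_all [leibniz]
  one_mem' := D.map_one_eq_zero
  add_mem' ha hb := by simp_all
  zero_mem' := D.map_zero
  neg_mem' ha := by simp_all
  inv_mem' x hx := by simp_all [leibniz_inv]

@[simp]
lemma mem_constants {x : K} : x ∈ D.constants ↔ D x = 0 := Iff.rfl

variable {n : ℕ}

lemma map_minA (C : Matrix (Fin n) (Fin n) K) (j : Fin n)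
    (hC : ∀ a c, a.1 ≠ 0 → D (C a c) = 0) :
    D (minA C j) = (fun k => D (C ⟨0, j.pos⟩ k)) ⬝ᵥ cofactorRow C j := by
  have hcof : ∀ k, cofactorRow C j k ∈ D.constants := fun k => by
    unfold cofactorRow
    split_ifs
    · exact mul_mem (pow_mem (neg_mem (one_mem _)) _)
        (minorDet_mem _ _ _ _ fun a c => hC _ _ (by simp [idxFrom]))
    · exact zero_mem _
  rw [minA_eq_dotProduct, dotProduct, dotProduct, map_sum]
  refine Finset.sum_congr rfl fun k _ => ?_
  rw [leibniz, (D.mem_constants).1 (hcof k), smul_zero, zero_add, smul_eq_mul, mul_comm]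

lemma map_lamVar (t : K) (Ct C1 : Matrix (Fin n) (Fin n) K) (j : Fin n) (ht : D t = 0)
    (hC1 : ∀ a c, D (C1 a c) = 0) :
    D (lamVar t Ct C1 j) = (-1) ^ (n - j.1) * t / minA C1 j * D (minA Ct j) := by
  have hcoef : (-1) ^ (n - j.1) * t ∈ D.constants :=
    mul_mem (pow_mem (neg_mem (one_mem _)) _) ht
  have hA : D (minA C1 j) = 0 := minorDet_mem D.constants _ _ _ fun a c => hC1 _ _
  rw [lamVar, leibniz, (D.mem_constants).1 hcoef, smul_zero, add_zero, leibniz_div_const _ _ _ hA,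
    smul_eq_mul, smul_eq_mul]
  ring

lemma map_muVar (t : K) (b : Fin n → K) (Ct C1 : Matrix (Fin n) (Fin n) K) (i : Fin n)
    (ht : D t = 0) (hCt : ∀ a c, D (Ct a c) = 0) (hC1 : ∀ a c, D (C1 a c) = 0) :
    D (muVar t b Ct C1 i) = (-1) ^ (n - 1 - i.1) * t⁻¹ * (minA C1 i / minC Ct i) *
      ∑ k : Fin n, if k.1 ≤ i.1 then minB Ct i k / minD Ct i * D (b k) else 0 := by
  have hCt' : ∀ {r} (rows cols : Fin r → Fin n), minorDet Ct rows cols ∈ D.constants :=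
    fun _ _ => minorDet_mem _ _ _ _ fun _ _ => hCt _ _
  have hC1' : ∀ {r} (rows cols : Fin r → Fin n), minorDet C1 rows cols ∈ D.constants :=
    fun _ _ => minorDet_mem _ _ _ _ fun _ _ => hC1 _ _
  have hcoef : (-1) ^ (n - 1 - i.1) * t⁻¹ * (minA C1 i / minC Ct i) ∈ D.constants :=
    mul_mem (mul_mem (pow_mem (neg_mem (one_mem _)) _) (inv_mem ht)) (div_mem (hC1' _ _) (hCt' _ _))
  rw [muVar, leibniz, (D.mem_constants).1 hcoef, smul_zero, add_zero, smul_eq_mul, map_sum]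
  congr 1
  refine Finset.sum_congr rfl fun k _ => ?_
  have hBD : D (minB Ct i k / minD Ct i) = 0 := div_mem (hCt' _ _) (hCt' _ _)
  split_ifs
  · rw [leibniz, hBD, smul_zero, add_zero, smul_eq_mul]
  · exact D.map_zero

end Derivation

section PoissonBracket

variable {A : Type*} [Field A] {n : ℕ} {P : A → A → A}

def bracketLeft (haddl : ∀ x y z : A, P (x + y) z = P x z + P y z)
    (hleib : ∀ x y z : A, P (x * y) z = x * P y z + y * P x z) (z : A) : Derivation ℤ A A :=
  Derivation.mk' (AddMonoidHom.mk' (P · z) fun x y => haddl x y z).toIntLinearMap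
    fun x y => hleib x y z

@[simp]
lemma bracketLeft_apply (haddl : ∀ x y z : A, P (x + y) z = P x z + P y z)
    (hleib : ∀ x y z : A, P (x * y) z = x * P y z + y * P x z) (z x : A) :
    bracketLeft haddl hleib z x = P x z :=
  rfl

lemma bracket_lamVar_eq_zero (haddl : ∀ x y z : A, P (x + y) z = P x z + P y z)
    (hleib : ∀ x y z : A, P (x * y) z = x * P y z + y * P x z)
    {t : A} {Ct C1 : Matrix (Fin n) (Fin n) A} (j : Fin n) {z : A} (ht : P t z = 0)
    (hCt : ∀ a c, P (Ct a c) z = 0) (hC1 : ∀ a c, P (C1 a c) z = 0) :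
    P (lamVar t Ct C1 j) z = 0 := by
  set D := bracketLeft haddl hleib z
  change D (lamVar t Ct C1 j) = 0
  rw [D.map_lamVar t Ct C1 j ht hC1, show D (minA Ct j) = 0 from minorDet_mem D.constants _ _ _
    fun _ _ => hCt _ _, mul_zero]

lemma bracket_b_lamVar (haddl : ∀ x y z : A, P (x + y) z = P x z + P y z)
    (hleib : ∀ x y z : A, P (x * y) z = x * P y z + y * P x z)
    (hskew : ∀ x y : A, P x y = -P y x) {t : A} (ht : ∀ x, P t x = 0) {b : Fin n → A}
    {Ct C1 : Matrix (Fin n) (Fin n) A}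
    (hbct : ∀ k l m : Fin n, P (b k) (Ct l m) = if l.1 = 0 ∧ m = k then -1 else 0)
    (hbc1 : ∀ k l m : Fin n, P (b k) (C1 l m) = 0) (j k : Fin n) :
    P (b k) (lamVar t Ct C1 j) = cofactorRow Ct j k * -((-1) ^ (n - j.1) * t / minA C1 j) := by
  set D := bracketLeft haddl hleib (b k)
  have hrow0 : (fun l => D (Ct ⟨0, j.pos⟩ l)) = Pi.single k 1 := by
    ext l
    rw [bracketLeft_apply, hskew, hbct, Pi.single_apply]
    by_cases hl : l = k <;> simp [hl]
  rw [hskew]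
  change -D (lamVar t Ct C1 j) = _
  rw [D.map_lamVar t Ct C1 j (ht _) fun a c => by rw [bracketLeft_apply, hskew, hbc1, neg_zero],
    D.map_minA Ct j fun a c ha => by rw [bracketLeft_apply, hskew, hbct, if_neg (by tauto),
      neg_zero], hrow0,
    single_dotProduct]
  ring

lemma bracket_muVar_lamVar (haddl : ∀ x y z : A, P (x + y) z = P x z + P y z)
    (hleib : ∀ x y z : A, P (x * y) z = x * P y z + y * P x z)
    (hskew : ∀ x y : A, P x y = -P y x) {t : A} (ht : ∀ x, P t x = 0) {b : Fin n → A}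
    {Ct C1 : Matrix (Fin n) (Fin n) A}
    (hbct : ∀ k l m : Fin n, P (b k) (Ct l m) = if l.1 = 0 ∧ m = k then -1 else 0)
    (hbc1 : ∀ k l m : Fin n, P (b k) (C1 l m) = 0)
    (hctct : ∀ l m l' m' : Fin n, P (Ct l m) (Ct l' m') = 0)
    (hctc1 : ∀ l m l' m' : Fin n, P (Ct l m) (C1 l' m') = 0)
    (hc1c1 : ∀ l m l' m' : Fin n, P (C1 l m) (C1 l' m') = 0) (i j : Fin n) :
    P (muVar t b Ct C1 i) (lamVar t Ct C1 j)
      = (-1) ^ (n - 1 - i.1) * t⁻¹ * (minA C1 i / minC Ct i) *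
          ∑ k : Fin n, if k.1 ≤ i.1 then minB Ct i k / minD Ct i *
            (cofactorRow Ct j k * -((-1) ^ (n - j.1) * t / minA C1 j)) else 0 := by
  set D := bracketLeft haddl hleib (lamVar t Ct C1 j)
  have hD : ∀ z, P t z = 0 → (∀ a c, P (Ct a c) z = 0) → (∀ a c, P (C1 a c) z = 0) →
      D z = 0 := fun z h1 h2 h3 => by
    rw [bracketLeft_apply, hskew, bracket_lamVar_eq_zero haddl hleib j h1 h2 h3, neg_zero]
  have hDCt : ∀ a c, D (Ct a c) = 0 := fun a c =>
    hD _ (ht _) (fun l m => hctct l m a c) fun l m => by rw [hskew, hctc1, neg_zero]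
  have hDC1 : ∀ a c, D (C1 a c) = 0 := fun a c =>
    hD _ (ht _) (fun l m => hctc1 l m a c) fun l m => hc1c1 l m a c
  rw [← bracketLeft_apply haddl hleib, D.map_muVar t b Ct C1 i (ht _) hDCt hDC1]
  simp only [D, bracketLeft_apply, bracket_b_lamVar haddl hleib hskew ht hbct hbc1]

end PoissonBracket

theorem stmt_14_general (n : ℕ) (A : Type*) [Field A] (P : A → A → A)
    (haddl : ∀ x y z : A, P (x + y) z = P x z + P y z)
    (hleib : ∀ x y z : A, P (x * y) z = x * P y z + y * P x z)
    (hskew : ∀ x y : A, P x y = -P y x)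
    (t : A) (ht : ∀ x, P t x = 0) (ht0 : t ≠ 0)
    (b : Fin n → A) (Ct C1 : Matrix (Fin n) (Fin n) A)
    (hbct : ∀ k l m : Fin n, P (b k) (Ct l m) = if l.1 = 0 ∧ m = k then -1 else 0)
    (hbc1 : ∀ k l m : Fin n, P (b k) (C1 l m) = 0)
    (hctct : ∀ l m l' m' : Fin n, P (Ct l m) (Ct l' m') = 0)
    (hctc1 : ∀ l m l' m' : Fin n, P (Ct l m) (C1 l' m') = 0)
    (hc1c1 : ∀ l m l' m' : Fin n, P (C1 l m) (C1 l' m') = 0)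
    (hden : ∀ i : Fin n, minA C1 i ≠ 0 ∧ minC Ct i ≠ 0 ∧ minD Ct i ≠ 0) :
    ∀ i j : Fin n,
      P (muVar t b Ct C1 i) (lamVar t Ct C1 j)
        = (minA C1 i / minC Ct i) *
            ∑ k : Fin n, (if k.1 ≤ i.1 then
              (minB Ct i k / minD Ct i) *
                ∑ l : Fin n, (if j.1 ≤ l.1 then
                  (-1 : A) ^ (l.1 - j.1) * (minOmit Ct j l / minA C1 j) *
                    (if k = l then 1 else 0)
                else 0)
            else 0) ∧
      P (muVar t b Ct C1 i) (lamVar t Ct C1 j) = if i = j then 1 else 0 := by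
  intro i j
  obtain ⟨hA, hC, hD⟩ := hden i
  have hdelta : ∀ k : Fin n, (∑ l : Fin n, if j.1 ≤ l.1 then
      (-1 : A) ^ (l.1 - j.1) * (minOmit Ct j l / minA C1 j) * (if k = l then 1 else 0) else 0)
        = cofactorRow Ct j k * (minA C1 j)⁻¹ := fun k => by
    rw [Finset.sum_eq_single k (fun l _ hl => by simp [Ne.symm hl]) (by simp), cofactorRow,
      if_pos rfl]
    split_ifs <;> ring
  have hbracket : P (muVar t b Ct C1 i) (lamVar t Ct C1 j) = if i = j then 1 else 0 := by
    rw [bracket_muVar_lamVar haddl hleib hskew ht hbct hbc1 hctct hctc1 hc1c1,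
      sum_minB_div_mul_cofactorRow _ _ _ _ hD]
    split_ifs with hij
    · subst hij
      have hsign : ((-1 : A) ^ (n - 1 - i.1)) ^ 2 = 1 := by
        rw [← pow_mul, mul_comm, pow_mul, neg_one_sq, one_pow]
      rw [show n - i.1 = n - 1 - i.1 + 1 by omega, pow_succ]
      field_simp
      linear_combination hsign
    · ring
  refine ⟨hbracket.trans ?_, hbracket⟩
  simp only [hdelta]
  rw [sum_minB_div_mul_cofactorRow _ _ _ _ hD]
  split_ifs with hij
  · subst hij
    field_simp
  · ring

/-- in the Poisson algebra generated by `b^{(t)}_{k,1}` and the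
entries of `C_t`, `C_1` (with `{b^{(t)}_{k,1}, c^{(t)}_{1,k}} = -1` the only
nonvanishing brackets and `t ≠ 0` central, all minors in denominators nonzero),
the bracket `{μ_i, λ_j}` equals
`(Δ^{0,i+1,…}_{i,…}(C₁)/Δ^{i+1,…}_{i+1,…}(C_t)) ∑_{k≤i}
  (Δ^{i,…}_{k,i+1,…}(C_t)/Δ^{i,…}_{i,…}(C_t)) ∑_{l≥j} (-1)^{l-j}
  (Δ^{j+1,…}_{j,…,l̂,…}(C_t)/Δ^{0,j+1,…}_{j,…}(C₁)) δ_{k,l}`,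
and this expression equals `δ_{i,j}`; in particular `{μ_i, λ_j} = δ_{i,j}`. -/
theorem stmt_14 (n : ℕ) (A : Type*) [Field A] (P : A → A → A)
    (haddl : ∀ x y z : A, P (x + y) z = P x z + P y z)
    (hleib : ∀ x y z : A, P (x * y) z = x * P y z + y * P x z)
    (hskew : ∀ x y : A, P x y = -P y x)
    (t : A) (ht : ∀ x, P t x = 0) (ht0 : t ≠ 0)
    (b : Fin n → A) (Ct C1 : Matrix (Fin n) (Fin n) A)
    (hbct : ∀ k l m : Fin n, P (b k) (Ct l m) = if l.1 = 0 ∧ m = k then -1 else 0)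
    (hbc1 : ∀ k l m : Fin n, P (b k) (C1 l m) = 0)
    (hbb : ∀ k k' : Fin n, P (b k) (b k') = 0)
    (hctct : ∀ l m l' m' : Fin n, P (Ct l m) (Ct l' m') = 0)
    (hctc1 : ∀ l m l' m' : Fin n, P (Ct l m) (C1 l' m') = 0)
    (hc1c1 : ∀ l m l' m' : Fin n, P (C1 l m) (C1 l' m') = 0)
    (hden : ∀ i : Fin n, minA C1 i ≠ 0 ∧ minC Ct i ≠ 0 ∧ minD Ct i ≠ 0) :
    ∀ i j : Fin n,
      P (muVar t b Ct C1 i) (lamVar t Ct C1 j)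
        = (minA C1 i / minC Ct i) *
            ∑ k : Fin n, (if k.1 ≤ i.1 then
              (minB Ct i k / minD Ct i) *
                ∑ l : Fin n, (if j.1 ≤ l.1 then
                  (-1 : A) ^ (l.1 - j.1) * (minOmit Ct j l / minA C1 j) *
                    (if k = l then 1 else 0)
                else 0)
            else 0) ∧
      P (muVar t b Ct C1 i) (lamVar t Ct C1 j) = if i = j then 1 else 0 :=
  stmt_14_general n A P haddl hleib hskew t ht ht0 b Ct C1 hbct hbc1 hctct hctc1 hc1c1 hden
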